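/- Let ŵ = π_r s_{i_l}⋯s_{i_1} be a reduced decomposition of an element of the extended affine Weyl group Ŵ and let {α̃^1,…,α̃^l} be its λ-sequence. Suppose α̃^p = β̃ + γ̃ for some 1 ≤ p ≤ l, where each of β̃, γ̃ is either a positive affine root or of the form [0,j] with j a positive integer. Then at least one of β̃, γ̃ belongs to λ(ŵ), and exactly one of β̃, γ̃ equals α̃^{p'} for some p' < p (i.e., occurs strictly before α̃^p in the λ-sequence). -/

import Mathlib

open scoped RealInnerProductSpace Classical

noncomputable section

/-- Euclidean space ℝⁿ. -/
abbrev EV (n : ℕ) := EuclideanSpace ℝ (Fin n)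

/-- ν_α = (α,α)/2. -/
def nuu {n : ℕ} (α : EV n) : ℝ := ⟪α, α⟫ / 2

/-- α^∨ = 2α/(α,α). -/
def coroot {n : ℕ} (α : EV n) : EV n := (2 / ⟪α, α⟫) • α

/-- the reflection s_α. -/
def srefl {n : ℕ} (α : EV n) : EV n → EV n :=
  fun z => z - (2 * ⟪z, α⟫ / ⟪α, α⟫) • α

/-- the affine reflection s_ã attached to ã = [α, ν_α j], acting linearly on ℝⁿ × ℝ. -/
def aRefl {n : ℕ} (p : EV n × ℝ) : EV n × ℝ → EV n × ℝ :=
  fun z => z - (2 * ⟪z.1, p.1⟫ / ⟪p.1, p.1⟫) • p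

/-- the translation element b' ∈ Ŵ, b'([z,ζ]) = [z, ζ − (z,b)]. -/
def transl {n : ℕ} (b : EV n) : EV n × ℝ → EV n × ℝ :=
  fun z => (z.1, z.2 - ⟪z.1, b⟫)

/-- extension of a nonaffine transformation to ℝⁿ × ℝ. -/
def affExt {n : ℕ} (w : EV n → EV n) : EV n × ℝ → EV n × ℝ :=
  fun z => (w z.1, z.2)

/-- An irreducible reduced crystallographic root system in ℝⁿ, with a fixed system of
positive/simple roots, normalized so that (α,α) = 2 for short roots; `hishort` is the
highest short root ϑ and `hiroot` the highest root θ. -/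
structure RootCtx (n : ℕ) where
  R : Finset (EV n)
  pos : Finset (EV n)
  simple : Fin n → EV n
  hishort : EV n
  hiroot : EV n
  nonzero : ∀ α ∈ R, α ≠ (0 : EV n)
  neg_mem : ∀ α ∈ R, -α ∈ R
  reduced : ∀ α ∈ R, ∀ t : ℝ, t • α ∈ R → t = 1 ∨ t = -1
  crys : ∀ α ∈ R, ∀ β ∈ R, ∃ m : ℤ, 2 * ⟪β, α⟫ / ⟪α, α⟫ = (m : ℝ)
  reflect_mem : ∀ α ∈ R, ∀ β ∈ R, β - (2 * ⟪β, α⟫ / ⟪α, α⟫) • α ∈ R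
  span_top : Submodule.span ℝ (R : Set (EV n)) = ⊤
  pos_subset : pos ⊆ R
  pos_iff : ∀ α ∈ R, (α ∈ pos ↔ -α ∉ pos)
  simple_pos : ∀ i, simple i ∈ pos
  simple_inj : Function.Injective simple
  pos_sum : ∀ α ∈ pos, ∃ f : Fin n → ℕ, α = ∑ i, (f i : ℝ) • simple i
  irred : ∀ S : Finset (EV n), S ⊆ R → S.Nonempty →
      (∀ α ∈ S, ∀ β ∈ R, β ∉ S → ⟪α, β⟫ = 0) → S = R
  normalized : ∀ α ∈ R, (∀ β ∈ R, ⟪α, α⟫ ≤ ⟪β, β⟫) → ⟪α, α⟫ = 2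
  hishort_pos : hishort ∈ pos
  hishort_short : ⟪hishort, hishort⟫ = 2
  hishort_high : ∀ α ∈ R, ⟪α, α⟫ = 2 →
      ∃ f : Fin n → ℕ, hishort - α = ∑ i, (f i : ℝ) • simple i
  hiroot_pos : hiroot ∈ pos
  hiroot_high : ∀ α ∈ R, ∃ f : Fin n → ℕ, hiroot - α = ∑ i, (f i : ℝ) • simple i

namespace RootCtx

variable {n : ℕ} (c : RootCtx n)

/-- word in the simple reflections of W; the letters are listed in the order of
application (the first letter of the list acts first), so `[i₁, …, i_l]`
represents s_{i_l} ⋯ s_{i_1}. -/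
def wWord (L : List (Fin n)) : EV n → EV n :=
  L.foldl (fun f i => srefl (c.simple i) ∘ f) id

/-- membership in the Weyl group W. -/
def IsWeyl (w : EV n → EV n) : Prop := ∃ L : List (Fin n), w = c.wWord L

/-- λ(w) = {α ∈ R₊ : w(α) ∈ R₋}. -/
def lamW (w : EV n → EV n) : Finset (EV n) :=
  c.pos.filter (fun α => -(w α) ∈ c.pos)

/-- λ_ν(w). -/
def lamWnu (w : EV n → EV n) (ν : ℝ) : Finset (EV n) :=
  (c.lamW w).filter (fun α => nuu α = ν)

/-- the length l(w) = |λ(w)| of w ∈ W. -/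
def lenW (w : EV n → EV n) : ℕ := (c.lamW w).card

/-- ρ_ν = (1/2) Σ_{α ∈ R₊, ν_α = ν} α. -/
def rho (ν : ℝ) : EV n :=
  (1 / 2 : ℝ) • ∑ α ∈ c.pos.filter (fun α => nuu α = ν), α

/-- ρ_ν^∨ = ρ_ν / ν. -/
def rhoCheck (ν : ℝ) : EV n := ν⁻¹ • c.rho ν

/-- the affine root system R̃ ⊂ ℝⁿ × ℝ. -/
def aR : Set (EV n × ℝ) := {p | ∃ α ∈ c.R, ∃ j : ℤ, p = (α, nuu α * j)}

/-- positive affine roots. -/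
def aPos : Set (EV n × ℝ) :=
  {p | p ∈ c.aR ∧ (0 < p.2 ∨ (p.2 = 0 ∧ p.1 ∈ c.pos))}

/-- negative affine roots. -/
def aNeg : Set (EV n × ℝ) := {p | -p ∈ c.aPos}

/-- the affine simple roots α_0, α_1, …, α_n; the index 0 corresponds to
α₀ = [−ϑ, 1]. -/
def asimple : Fin (n + 1) → EV n × ℝ :=
  fun i => if h : i = 0 then (-c.hishort, (1 : ℝ)) else (c.simple (i.pred h), (0 : ℝ))

/-- the affine simple reflections s_0, s_1, …, s_n. -/
def aS (i : Fin (n + 1)) : EV n × ℝ → EV n × ℝ := aRefl (c.asimple i)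

/-- word in the affine simple reflections (letters in order of application). -/
def affWord (L : List (Fin (n + 1))) : EV n × ℝ → EV n × ℝ :=
  L.foldl (fun f i => c.aS i ∘ f) id

/-- the weight lattice P. -/
def PwSet : Set (EV n) :=
  {b | ∀ i, ∃ m : ℤ, 2 * ⟪b, c.simple i⟫ / ⟪c.simple i, c.simple i⟫ = (m : ℝ)}

/-- the dominant weights P₊. -/
def PplusSet : Set (EV n) :=
  {b | b ∈ c.PwSet ∧ ∀ i, 0 ≤ ⟪b, c.simple i⟫}

/-- membership in the extended affine Weyl group Ŵ = W ⋉ P,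
via the normal form w·b' with w ∈ W and b ∈ P. -/
def IsExtW (f : EV n × ℝ → EV n × ℝ) : Prop :=
  ∃ w b, c.IsWeyl w ∧ b ∈ c.PwSet ∧ f = affExt w ∘ transl b

/-- membership in Π = {π ∈ Ŵ : π(R̃₊) = R̃₊}. -/
def IsPi (f : EV n × ℝ → EV n × ℝ) : Prop :=
  c.IsExtW f ∧ f '' c.aPos = c.aPos

/-- the λ-set λ(ŵ) = R̃₊ ∩ ŵ⁻¹(R̃₋) of an affine transformation. -/
def aLam (f : EV n × ℝ → EV n × ℝ) : Set (EV n × ℝ) :=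
  {p | p ∈ c.aPos ∧ f p ∈ c.aNeg}

/-- the ν-part λ_ν(ŵ). -/
def aLamNu (f : EV n × ℝ → EV n × ℝ) (ν : ℝ) : Set (EV n × ℝ) :=
  {p | p ∈ c.aLam f ∧ nuu p.1 = ν}

/-- the length l(ŵ) = |λ(ŵ)|. -/
def aLen (f : EV n × ℝ → EV n × ℝ) : ℕ := (c.aLam f).ncard

/-- `(π, L)` is a reduced decomposition ŵ = π_r s_{i_l} ⋯ s_{i_1}: π ∈ Π and
the word length is minimal among all such presentations of the same element. -/
def IsReducedA (π : EV n × ℝ → EV n × ℝ) (L : List (Fin (n + 1))) : Prop :=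
  c.IsPi π ∧
    ∀ (π' : EV n × ℝ → EV n × ℝ) (L' : List (Fin (n + 1))),
      c.IsPi π' → π' ∘ c.affWord L' = π ∘ c.affWord L → L.length ≤ L'.length

/-- the λ-sequence α̃¹, α̃², … of a word (0-based indexing):
α̃^{k+1} = s_{i_1} s_{i_2} ⋯ s_{i_k}(α_{i_{k+1}}). -/
def lamSeq (L : List (Fin (n + 1))) (k : Fin L.length) : EV n × ℝ :=
  ((L.take k).foldr (fun i f => c.aS i ∘ f) id) (c.asimple (L.get k))

/-- the λ-sequence of a word in W (0-based indexing). -/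
def lamSeqW (L : List (Fin n)) (k : Fin L.length) : EV n :=
  ((L.take k).foldr (fun i f => srefl (c.simple i) ∘ f) id) (c.simple (L.get k))

end RootCtx

/-!
Let u = s_{i_{p-1}} ⋯ s_{i_1} (`affWord (L.take p)`: the λ-sequence is indexed from 0 here),
so that u(α̃ᵖ) = α_{i_p}. Since s_i permutes R̃₊ ∖ {α_i}, a positive root x with u(x) negative
is one of α̃¹, …, α̃ᵖ⁻¹; conversely, for a reduced word u sends each of these to a negative
root, for otherwise a later letter would send it back to a positive root and the two letters
could be cancelled. The imaginary roots [0, j] are fixed by u and do not occur in the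
λ-sequence.

Applying u to α̃ᵖ = β̃ + γ̃ gives u(β̃) + u(γ̃) = α_{i_p}. Neither α_i nor -α_i is a sum of two
positive roots (for α_i apply s_i), and α_i - [0, j] is a negative root; so exactly one of
u(β̃), u(γ̃) is negative.
-/

section Reflections

variable {n : ℕ}

structure IsAffIsometry (g : EV n × ℝ → EV n × ℝ) : Prop extends IsLinearMap ℝ g where
  inner_fst : ∀ y z, ⟪(g y).1, (g z).1⟫ = ⟪y.1, z.1⟫

namespace IsAffIsometry

variable {g h : EV n × ℝ → EV n × ℝ}

theorem id : IsAffIsometry (id : EV n × ℝ → EV n × ℝ) :=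
  ⟨⟨fun _ _ => rfl, fun _ _ => rfl⟩, fun _ _ => rfl⟩

theorem comp (hg : IsAffIsometry g) (hh : IsAffIsometry h) : IsAffIsometry (g ∘ h) :=
  ⟨⟨fun y z => by simp [hh.map_add, hg.map_add], fun t y => by simp [hh.map_smul, hg.map_smul]⟩,
    fun y z => by simp [hg.inner_fst, hh.inner_fst]⟩

theorem map_neg (hg : IsAffIsometry g) (y : EV n × ℝ) : g (-y) = -g y :=
  hg.toIsLinearMap.map_neg y

theorem aRefl_map (hg : IsAffIsometry g) (p z : EV n × ℝ) :
    aRefl (g p) (g z) = g (aRefl p z) := by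
  rw [aRefl, aRefl, hg.inner_fst, hg.inner_fst, hg.toIsLinearMap.map_sub, hg.map_smul]

end IsAffIsometry

theorem isAffIsometry_aRefl {p : EV n × ℝ} (hp : ⟪p.1, p.1⟫ ≠ 0) : IsAffIsometry (aRefl p) where
  map_add y z := by
    simp only [aRefl, Prod.fst_add, inner_add_left, add_div, mul_add, add_smul]
    abel
  map_smul t y := by
    simp only [aRefl, Prod.smul_fst, real_inner_smul_left, smul_sub, smul_smul]
    congr 2
    ring
  inner_fst y z := by
    simp only [aRefl, Prod.fst_sub, Prod.smul_fst, inner_sub_left, inner_sub_right,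
      real_inner_smul_left, real_inner_smul_right, real_inner_comm p.1]
    field_simp
    ring

theorem aRefl_aRefl {p : EV n × ℝ} (hp : ⟪p.1, p.1⟫ ≠ 0) (z : EV n × ℝ) :
    aRefl p (aRefl p z) = z := by
  have hfst : ⟪(aRefl p z).1, p.1⟫ = -⟪z.1, p.1⟫ := by
    simp only [aRefl, Prod.fst_sub, Prod.smul_fst, inner_sub_left, real_inner_smul_left]
    field_simp
    ring
  rw [aRefl, hfst, aRefl, mul_neg, neg_div, neg_smul, sub_neg_eq_add, sub_add_cancel]

theorem aRefl_self {p : EV n × ℝ} (hp : ⟪p.1, p.1⟫ ≠ 0) : aRefl p p = -p := by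
  rw [aRefl, mul_div_assoc, div_self hp, mul_one, two_smul]
  abel

theorem aRefl_zero_fst (p : EV n × ℝ) (t : ℝ) : aRefl p (0, t) = (0, t) := by
  simp [aRefl]

theorem inner_self_eq_two_mul_nuu (α : EV n) : ⟪α, α⟫ = 2 * nuu α := by
  rw [nuu]
  ring

theorem eq_neg_of_inner_eq_neg_inner_self {x y : EV n} (hxy : ⟪x, y⟫ = -⟪x, x⟫)
    (hy : ⟪y, y⟫ = ⟪x, x⟫) : x = -y := by
  refine eq_neg_of_add_eq_zero_left (inner_self_eq_zero (𝕜 := ℝ).1 ?_)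
  rw [real_inner_add_add_self, hxy, hy]
  ring

theorem inner_srefl_srefl {α : EV n} (hα : ⟪α, α⟫ ≠ 0) (x y : EV n) :
    ⟪srefl α x, srefl α y⟫ = ⟪x, y⟫ :=
  (isAffIsometry_aRefl (p := (α, 0)) hα).inner_fst (x, 0) (y, 0)

theorem nuu_srefl {α : EV n} (hα : ⟪α, α⟫ ≠ 0) (β : EV n) : nuu (srefl α β) = nuu β := by
  rw [nuu, nuu, inner_srefl_srefl hα]

end Reflections

namespace RootCtx

variable {n : ℕ}

section RootSystem

variable (c : RootCtx n)

section

variable {c}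

theorem two_le_inner_self {α : EV n} (hα : α ∈ c.R) : 2 ≤ ⟪α, α⟫ := by
  obtain ⟨m, hm, hmin⟩ :=
    c.R.exists_min_image (fun β => ⟪β, β⟫) ⟨_, c.pos_subset c.hishort_pos⟩
  exact (c.normalized m hm hmin).symm.le.trans (hmin α hα)

theorem inner_self_pos {α : EV n} (hα : α ∈ c.R) : 0 < ⟪α, α⟫ :=
  two_pos.trans_le (two_le_inner_self hα)

theorem inner_self_ne_zero {α : EV n} (hα : α ∈ c.R) : ⟪α, α⟫ ≠ 0 :=
  (inner_self_pos hα).ne'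

theorem one_le_nuu {α : EV n} (hα : α ∈ c.R) : 1 ≤ nuu α := by
  linarith [two_le_inner_self hα, inner_self_eq_two_mul_nuu α]

theorem neg_mem_pos_of_not_mem_pos {α : EV n} (hα : α ∈ c.R) (h : α ∉ c.pos) : -α ∈ c.pos :=
  not_not.1 (mt (c.pos_iff α hα).2 h)

theorem inner_eq_nuu_mul_int {α β : EV n} (hα : α ∈ c.R) (hβ : β ∈ c.R) :
    ∃ m : ℤ, ⟪β, α⟫ = nuu α * m := by
  obtain ⟨m, hm⟩ := c.crys α hα β hβ
  refine ⟨m, ?_⟩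
  rw [← hm, nuu, div_mul_div_comm, mul_comm, mul_div_mul_right _ _ (inner_self_ne_zero hα)]
  ring

end

theorem simple_mem (i : Fin n) : c.simple i ∈ c.R := c.pos_subset (c.simple_pos i)

theorem hishort_mem : c.hishort ∈ c.R := c.pos_subset c.hishort_pos

theorem srefl_mem {α β : EV n} (hα : α ∈ c.R) (hβ : β ∈ c.R) : srefl α β ∈ c.R :=
  c.reflect_mem α hα β hβ

theorem top_le_span_simple : ⊤ ≤ Submodule.span ℝ (Set.range c.simple) := by
  have hpos : ∀ α ∈ c.pos, α ∈ Submodule.span ℝ (Set.range c.simple) := by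
    intro α hα
    obtain ⟨f, rfl⟩ := c.pos_sum α hα
    exact Submodule.sum_mem _ fun i _ =>
      Submodule.smul_mem _ _ (Submodule.subset_span (Set.mem_range_self i))
  rw [← c.span_top, Submodule.span_le]
  intro α hα
  by_cases h : α ∈ c.pos
  · exact hpos α h
  · simpa using Submodule.neg_mem _ (hpos _ (neg_mem_pos_of_not_mem_pos hα h))

theorem linearIndependent_simple : LinearIndependent ℝ c.simple :=
  linearIndependent_of_top_le_span_of_card_eq_finrank c.top_le_span_simple (by simp)

def simpleBasis : Module.Basis (Fin n) ℝ (EV n) :=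
  .mk c.linearIndependent_simple c.top_le_span_simple

theorem coord_simple (i j : Fin n) :
    c.simpleBasis.coord j (c.simple i) = if i = j then 1 else 0 := by
  rw [← Module.Basis.mk_apply c.linearIndependent_simple c.top_le_span_simple i,
    Module.Basis.coord_apply, ← simpleBasis, Module.Basis.repr_self, Finsupp.single_apply]

def IsNatComb (v : EV n) : Prop := ∃ f : Fin n → ℕ, v = ∑ i, (f i : ℝ) • c.simple i

variable {c}

theorem isNatComb_of_mem_pos {α : EV n} (hα : α ∈ c.pos) : c.IsNatComb α := c.pos_sum α hα

theorem IsNatComb.coord_nonneg {v : EV n} (hv : c.IsNatComb v) (j : Fin n) :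
    0 ≤ c.simpleBasis.coord j v := by
  obtain ⟨f, rfl⟩ := hv
  simp [map_sum, coord_simple, -Module.Basis.coord_apply]

theorem IsNatComb.add {v w : EV n} (hv : c.IsNatComb v) (hw : c.IsNatComb w) :
    c.IsNatComb (v + w) := by
  obtain ⟨f, rfl⟩ := hv
  obtain ⟨g, rfl⟩ := hw
  exact ⟨f + g, by simp [add_smul, Finset.sum_add_distrib]⟩

theorem IsNatComb.eq_zero_of_add_eq_zero {v w : EV n} (hv : c.IsNatComb v) (hw : c.IsNatComb w)
    (h : v + w = 0) : v = 0 := by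
  refine c.simpleBasis.forall_coord_eq_zero_iff.1 fun j => ?_
  have hj := congrArg (c.simpleBasis.coord j) h
  rw [map_add, map_zero] at hj
  linarith [hv.coord_nonneg j, hw.coord_nonneg j]

theorem srefl_simple_mem_pos {i : Fin n} {α : EV n} (hα : α ∈ c.pos) (hne : α ≠ c.simple i) :
    srefl (c.simple i) α ∈ c.pos := by
  by_contra hneg
  have hαR := c.pos_subset hα
  have hw : c.IsNatComb (-srefl (c.simple i) α) :=
    c.pos_sum _ (neg_mem_pos_of_not_mem_pos (c.srefl_mem (c.simple_mem i) hαR) hneg)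
  have hsum : α + -srefl (c.simple i) α
      = (2 * ⟪α, c.simple i⟫ / ⟪c.simple i, c.simple i⟫) • c.simple i := by
    simp only [srefl, neg_sub, add_sub_cancel]
  have hcoord : ∀ j, j ≠ i → c.simpleBasis.coord j α = 0 := by
    intro j hj
    have h := congrArg (c.simpleBasis.coord j) hsum
    rw [map_add, map_smul, coord_simple, if_neg (Ne.symm hj), smul_zero] at h
    linarith [(isNatComb_of_mem_pos hα).coord_nonneg j, hw.coord_nonneg j]
  have hαeq : α = c.simpleBasis.coord i α • c.simple i := by
    refine c.simpleBasis.ext_elem fun j => ?_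
    rw [← Module.Basis.coord_apply, ← Module.Basis.coord_apply, map_smul, coord_simple]
    by_cases hj : j = i
    · subst hj
      simp
    · simp [hcoord j hj, Ne.symm hj]
  rcases c.reduced _ (c.simple_mem i) _ (hαeq ▸ hαR) with h | h
  · exact hne (by rw [hαeq, h, one_smul])
  · linarith [(isNatComb_of_mem_pos hα).coord_nonneg i]

theorem inner_simple_hishort_nonneg (i : Fin n) : 0 ≤ ⟪c.simple i, c.hishort⟫ := by
  refine not_lt.1 fun h => ?_
  have ht : 2 * ⟪c.hishort, c.simple i⟫ / ⟪c.simple i, c.simple i⟫ < 0 :=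
    div_neg_of_neg_of_pos (by rw [real_inner_comm] at h; linarith)
      (inner_self_pos (c.simple_mem i))
  have hshort : ⟪srefl (c.simple i) c.hishort, srefl (c.simple i) c.hishort⟫ = 2 := by
    rw [inner_srefl_srefl (inner_self_ne_zero (c.simple_mem i)), c.hishort_short]
  have hNN : c.IsNatComb (c.hishort - srefl (c.simple i) c.hishort) :=
    c.hishort_high _ (c.srefl_mem (c.simple_mem i) c.hishort_mem) hshort
  have hdiff : c.hishort - srefl (c.simple i) c.hishort
      = (2 * ⟪c.hishort, c.simple i⟫ / ⟪c.simple i, c.simple i⟫) • c.simple i := by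
    simp only [srefl, sub_sub_cancel]
  have := hNN.coord_nonneg i
  rw [hdiff, map_smul, coord_simple, if_pos rfl, smul_eq_mul, mul_one] at this
  linarith

theorem inner_hishort_nonneg {α : EV n} (hα : α ∈ c.pos) : 0 ≤ ⟪α, c.hishort⟫ := by
  obtain ⟨f, rfl⟩ := c.pos_sum α hα
  rw [sum_inner]
  exact Finset.sum_nonneg fun i _ => by
    rw [real_inner_smul_left]
    exact mul_nonneg (Nat.cast_nonneg _) (inner_simple_hishort_nonneg i)

end RootSystem

section AffineRootSystem

variable (c : RootCtx n)

section

variable {c}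

def aImagPos : Set (EV n × ℝ) := {y | y.1 = 0 ∧ ∃ j : ℤ, 0 < j ∧ y.2 = j}

theorem fst_mem_of_mem_aR {x : EV n × ℝ} (hx : x ∈ c.aR) : x.1 ∈ c.R := by
  obtain ⟨α, hα, j, rfl⟩ := hx
  exact hα

theorem not_mem_aR_of_fst_eq_zero {x : EV n × ℝ} (hx : x.1 = 0) : x ∉ c.aR :=
  fun h => c.nonzero _ (fst_mem_of_mem_aR h) hx

theorem neg_mem_aR {x : EV n × ℝ} (hx : x ∈ c.aR) : -x ∈ c.aR := by
  obtain ⟨α, hα, j, rfl⟩ := hx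
  refine ⟨-α, c.neg_mem α hα, -j, ?_⟩
  simp [nuu]

theorem mem_aR_of_mem_aNeg {x : EV n × ℝ} (hx : x ∈ c.aNeg) : x ∈ c.aR := by
  simpa using neg_mem_aR hx.1

theorem snd_nonneg_of_mem_aPos {x : EV n × ℝ} (hx : x ∈ c.aPos) : 0 ≤ x.2 := by
  rcases hx.2 with h | ⟨h, -⟩ <;> linarith

theorem fst_mem_pos_of_mem_aPos {x : EV n × ℝ} (hx : x ∈ c.aPos) (h0 : x.2 = 0) : x.1 ∈ c.pos := by
  rcases hx.2 with h | ⟨-, h⟩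
  · linarith
  · exact h

theorem not_mem_aNeg_of_mem_aPos {x : EV n × ℝ} (hx : x ∈ c.aPos) : x ∉ c.aNeg := by
  intro hneg
  rcases hx.2 with h | ⟨h, hpos⟩
  · linarith [snd_nonneg_of_mem_aPos hneg, show (-x).2 = -x.2 from rfl]
  · exact (c.pos_iff _ (fst_mem_of_mem_aR hx.1)).1 hpos
      (fst_mem_pos_of_mem_aPos hneg (by simp [h]))

theorem mem_aPos_or_mem_aNeg {x : EV n × ℝ} (hx : x ∈ c.aR) : x ∈ c.aPos ∨ x ∈ c.aNeg := by
  rcases lt_trichotomy x.2 0 with hlt | heq | hgt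
  · exact Or.inr ⟨neg_mem_aR hx, Or.inl (by simpa using hlt)⟩
  · by_cases hpos : x.1 ∈ c.pos
    · exact Or.inl ⟨hx, Or.inr ⟨heq, hpos⟩⟩
    · exact Or.inr ⟨neg_mem_aR hx, Or.inr ⟨by simp [heq],
        neg_mem_pos_of_not_mem_pos (fst_mem_of_mem_aR hx) hpos⟩⟩
  · exact Or.inl ⟨hx, Or.inl hgt⟩

theorem not_mem_aR_of_mem_aImagPos {y : EV n × ℝ} (hy : y ∈ aImagPos) : y ∉ c.aR :=
  not_mem_aR_of_fst_eq_zero hy.1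

theorem not_mem_aNeg_of_mem_aImagPos {y : EV n × ℝ} (hy : y ∈ aImagPos) : y ∉ c.aNeg :=
  fun h => not_mem_aR_of_mem_aImagPos hy (mem_aR_of_mem_aNeg h)

end

theorem asimple_zero : c.asimple 0 = (-c.hishort, 1) := rfl

theorem asimple_of_ne_zero {i : Fin (n + 1)} (hi : i ≠ 0) :
    c.asimple i = (c.simple (i.pred hi), 0) := by
  rw [asimple, dif_neg hi]

theorem asimple_fst_mem (i : Fin (n + 1)) : (c.asimple i).1 ∈ c.R := by
  rcases eq_or_ne i 0 with rfl | hi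
  · exact c.neg_mem _ c.hishort_mem
  · rw [c.asimple_of_ne_zero hi]
    exact c.simple_mem _

theorem asimple_mem_aPos (i : Fin (n + 1)) : c.asimple i ∈ c.aPos := by
  rcases eq_or_ne i 0 with rfl | hi
  · refine ⟨⟨-c.hishort, c.neg_mem _ c.hishort_mem, 1, ?_⟩, Or.inl one_pos⟩
    rw [asimple_zero, nuu, inner_neg_neg, c.hishort_short]
    norm_num
  · rw [c.asimple_of_ne_zero hi]
    exact ⟨⟨c.simple (i.pred hi), c.simple_mem _, 0, by simp⟩, Or.inr ⟨rfl, c.simple_pos _⟩⟩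

theorem isAffIsometry_aS (i : Fin (n + 1)) : IsAffIsometry (c.aS i) :=
  isAffIsometry_aRefl (inner_self_ne_zero (c.asimple_fst_mem i))

theorem aS_aS (i : Fin (n + 1)) (x : EV n × ℝ) : c.aS i (c.aS i x) = x :=
  aRefl_aRefl (inner_self_ne_zero (c.asimple_fst_mem i)) x

theorem aS_asimple (i : Fin (n + 1)) : c.aS i (c.asimple i) = -c.asimple i :=
  aRefl_self (inner_self_ne_zero (c.asimple_fst_mem i))

theorem aS_zero_apply (x : EV n × ℝ) :
    c.aS 0 x = (srefl c.hishort x.1, x.2 + ⟪x.1, c.hishort⟫) := by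
  have hcoef : 2 * ⟪x.1, -c.hishort⟫ / ⟪-c.hishort, -c.hishort⟫ = -⟪x.1, c.hishort⟫ := by
    rw [inner_neg_right, inner_neg_neg, c.hishort_short]
    ring
  have hcoef' : 2 * ⟪x.1, c.hishort⟫ / ⟪c.hishort, c.hishort⟫ = ⟪x.1, c.hishort⟫ := by
    rw [c.hishort_short]
    ring
  simp only [aS, aRefl, asimple_zero, hcoef, srefl, hcoef']
  ext <;> simp

theorem aS_of_ne_zero_apply {i : Fin (n + 1)} (hi : i ≠ 0) (x : EV n × ℝ) :
    c.aS i x = (srefl (c.simple (i.pred hi)) x.1, x.2) := by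
  rw [aS, aRefl, c.asimple_of_ne_zero hi]
  ext <;> simp [srefl]

theorem aS_mem_aR (i : Fin (n + 1)) {x : EV n × ℝ} (hx : x ∈ c.aR) : c.aS i x ∈ c.aR := by
  obtain ⟨α, hα, j, rfl⟩ := hx
  rcases eq_or_ne i 0 with rfl | hi
  · obtain ⟨m, hm⟩ := inner_eq_nuu_mul_int hα c.hishort_mem
    refine ⟨_, c.srefl_mem c.hishort_mem hα, j + m, ?_⟩
    rw [aS_zero_apply, nuu_srefl (inner_self_ne_zero c.hishort_mem), real_inner_comm, hm]
    push_cast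
    ring_nf
  · refine ⟨srefl (c.simple (i.pred hi)) α, c.srefl_mem (c.simple_mem _) hα, j, ?_⟩
    rw [aS_of_ne_zero_apply c hi, nuu_srefl (inner_self_ne_zero (c.simple_mem _))]

theorem aS_mem_aR_iff (i : Fin (n + 1)) {x : EV n × ℝ} : c.aS i x ∈ c.aR ↔ x ∈ c.aR :=
  ⟨fun h => c.aS_aS i x ▸ c.aS_mem_aR i h, c.aS_mem_aR i⟩

theorem eq_asimple_zero_of_snd_aS_zero_neg {x : EV n × ℝ} (hx : x ∈ c.aPos)
    (hneg : (c.aS 0 x).2 < 0) : x = c.asimple 0 := by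
  obtain ⟨⟨α, hα, j, rfl⟩, hpos⟩ := hx
  obtain ⟨m, hm⟩ := inner_eq_nuu_mul_int hα c.hishort_mem
  rw [aS_zero_apply, real_inner_comm] at hneg
  dsimp only at hneg hpos
  have hν := one_le_nuu hα
  have hj : 0 < j := by
    rcases hpos with h | ⟨h, hαpos⟩
    · exact_mod_cast pos_of_mul_pos_right h (by linarith)
    · linarith [inner_hishort_nonneg hαpos, real_inner_comm α c.hishort]
  have hjm : j + m < 0 := by
    have : ((j + m : ℤ) : ℝ) < 0 := by push_cast; nlinarith
    exact_mod_cast this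
  -- Cauchy–Schwarz: ν² m² = ⟪α, ϑ⟫² ≤ ⟪α, α⟫ ⟪ϑ, ϑ⟫ = 4ν, which forces ν = 1, m = -2, j = 1.
  have hcs := real_inner_mul_inner_self_le c.hishort α
  rw [hm, c.hishort_short, inner_self_eq_two_mul_nuu] at hcs
  have hm2 : (m : ℝ) ≤ -2 := by exact_mod_cast (by omega : m ≤ -2)
  have hνm : nuu α * (m * m) ≤ 4 :=
    le_of_mul_le_mul_left (by nlinarith) (by linarith : 0 < nuu α)
  have hmm : 4 ≤ (m : ℝ) * m := by nlinarith
  have hν1 : nuu α = 1 := by nlinarith [mul_le_mul_of_nonneg_left hmm (by linarith : 0 ≤ nuu α)]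
  have hm' : m = -2 := by
    have : (-2 : ℝ) ≤ m := by nlinarith
    exact le_antisymm (by exact_mod_cast hm2) (by exact_mod_cast this)
  have hj1 : j = 1 := by omega
  have hαθ : α = -c.hishort := by
    refine eq_neg_of_inner_eq_neg_inner_self ?_ ?_
    · rw [real_inner_comm c.hishort α, hm, hm', inner_self_eq_two_mul_nuu, hν1]
      norm_num
    · rw [c.hishort_short, inner_self_eq_two_mul_nuu, hν1]
      norm_num
  rw [asimple_zero, Prod.ext_iff]
  exact ⟨hαθ, by simp [hν1, hj1]⟩

theorem aS_zero_mem_aPos {x : EV n × ℝ} (hx : x ∈ c.aPos) (hne : x ≠ c.asimple 0) :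
    c.aS 0 x ∈ c.aPos := by
  have hyR : c.aS 0 x ∈ c.aR := c.aS_mem_aR 0 hx.1
  rcases lt_trichotomy (c.aS 0 x).2 0 with hlt | hzero | hgt
  · exact absurd (c.eq_asimple_zero_of_snd_aS_zero_neg hx hlt) hne
  · refine ⟨hyR, Or.inr ⟨hzero, ?_⟩⟩
    by_contra hneg
    -- Otherwise s₀ maps the positive root [-y, 0], y = (s₀ x).1, to -x, whose second
    -- coordinate ⟪-y, ϑ⟫ is nonnegative; this forces x = [α, 0], which s₀ fixes.
    have hδ : -(c.aS 0 x).1 ∈ c.pos :=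
      neg_mem_pos_of_not_mem_pos (fst_mem_of_mem_aR hyR) hneg
    have himage : c.aS 0 (-c.aS 0 x) = -x := by
      rw [(c.isAffIsometry_aS 0).map_neg, c.aS_aS]
    have hsnd : -x.2 = ⟪-(c.aS 0 x).1, c.hishort⟫ := by
      have := congrArg Prod.snd himage
      rw [aS_zero_apply, Prod.snd_neg, Prod.fst_neg, hzero, neg_zero, zero_add] at this
      exact this.symm
    have hx2 : x.2 = 0 :=
      le_antisymm (by linarith [inner_hishort_nonneg hδ]) (snd_nonneg_of_mem_aPos hx)
    have hθ : ⟪x.1, c.hishort⟫ = 0 := by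
      rw [aS_zero_apply, hx2, zero_add] at hzero
      exact hzero
    have hfix : c.aS 0 x = x := by
      simp only [aS_zero_apply, srefl, hθ, add_zero, mul_zero, zero_div, zero_smul, sub_zero]
    exact hneg (by rw [hfix]; exact fst_mem_pos_of_mem_aPos hx hx2)
  · exact ⟨hyR, Or.inl hgt⟩

theorem aS_mem_aPos (i : Fin (n + 1)) {x : EV n × ℝ} (hx : x ∈ c.aPos) (hne : x ≠ c.asimple i) :
    c.aS i x ∈ c.aPos := by
  rcases eq_or_ne i 0 with rfl | hi
  · exact c.aS_zero_mem_aPos hx hne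
  · have hyR := c.aS_mem_aR i hx.1
    rw [c.aS_of_ne_zero_apply hi] at hyR ⊢
    rcases hx.2 with hpos | ⟨h0, hpos⟩
    · exact ⟨hyR, Or.inl hpos⟩
    · refine ⟨hyR, Or.inr ⟨h0, srefl_simple_mem_pos hpos fun h => hne ?_⟩⟩
      rw [c.asimple_of_ne_zero hi]
      exact Prod.ext h h0

end AffineRootSystem

section Words

variable (c : RootCtx n)

theorem foldl_aS_comp (L : List (Fin (n + 1))) (g : EV n × ℝ → EV n × ℝ) :
    L.foldl (fun f i => c.aS i ∘ f) g = c.affWord L ∘ g := by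
  induction L generalizing g with
  | nil => rfl
  | cons i L ih =>
    simp only [List.foldl_cons, affWord]
    rw [ih, ih (c.aS i ∘ id)]
    rfl

theorem affWord_cons (i : Fin (n + 1)) (L : List (Fin (n + 1))) :
    c.affWord (i :: L) = c.affWord L ∘ c.aS i :=
  c.foldl_aS_comp L _

theorem affWord_append (A B : List (Fin (n + 1))) :
    c.affWord (A ++ B) = c.affWord B ∘ c.affWord A := by
  rw [affWord, List.foldl_append, foldl_aS_comp]
  rfl

theorem affWord_singleton (i : Fin (n + 1)) : c.affWord [i] = c.aS i := rfl

theorem isAffIsometry_affWord (L : List (Fin (n + 1))) : IsAffIsometry (c.affWord L) := by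
  induction L with
  | nil => exact .id
  | cons i L ih =>
    rw [affWord_cons]
    exact ih.comp (c.isAffIsometry_aS i)

theorem affWord_mem_aR_iff (L : List (Fin (n + 1))) {x : EV n × ℝ} :
    c.affWord L x ∈ c.aR ↔ x ∈ c.aR := by
  induction L generalizing x with
  | nil => rfl
  | cons i L ih =>
    rw [affWord_cons, Function.comp_apply, ih, aS_mem_aR_iff]

theorem affWord_zero_fst (L : List (Fin (n + 1))) (t : ℝ) : c.affWord L (0, t) = (0, t) := by
  induction L with
  | nil => rfl
  | cons i L ih =>
    rw [affWord_cons, Function.comp_apply, aS, aRefl_zero_fst, ih]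

theorem affWord_take_succ (L : List (Fin (n + 1))) {q : ℕ} (hq : q < L.length) :
    c.affWord (L.take (q + 1)) = c.aS (L.get ⟨q, hq⟩) ∘ c.affWord (L.take q) := by
  rw [← List.take_concat_get hq, List.concat_eq_append, affWord_append]
  rfl

theorem foldr_aS_eq_iff (M : List (Fin (n + 1))) {x y : EV n × ℝ} :
    M.foldr (fun i f => c.aS i ∘ f) id y = x ↔ c.affWord M x = y := by
  induction M generalizing x with
  | nil => exact eq_comm
  | cons i M ih =>
    rw [List.foldr_cons, Function.comp_apply, affWord_cons, Function.comp_apply, ← ih]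
    constructor <;> intro h
    · rw [← h, c.aS_aS]
    · rw [h, c.aS_aS]

theorem lamSeq_eq_iff (L : List (Fin (n + 1))) (k : Fin L.length) {x : EV n × ℝ} :
    c.lamSeq L k = x ↔ c.affWord (L.take k) x = c.asimple (L.get k) :=
  c.foldr_aS_eq_iff _

theorem affWord_take_lamSeq (L : List (Fin (n + 1))) (k : Fin L.length) :
    c.affWord (L.take k) (c.lamSeq L k) = c.asimple (L.get k) :=
  (c.lamSeq_eq_iff L k).1 rfl

theorem lamSeq_mem_aR (L : List (Fin (n + 1))) (k : Fin L.length) : c.lamSeq L k ∈ c.aR := by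
  rw [← c.affWord_mem_aR_iff (L.take k), affWord_take_lamSeq]
  exact (c.asimple_mem_aPos _).1

variable {c}

theorem affWord_of_mem_aImagPos (L : List (Fin (n + 1))) {y : EV n × ℝ} (hy : y ∈ aImagPos) :
    c.affWord L y = y := by
  rw [show y = (0, y.2) from Prod.ext hy.1 rfl, affWord_zero_fst]

theorem affWord_mem_aR_or_mem_aImagPos (L : List (Fin (n + 1))) {y : EV n × ℝ}
    (hy : y ∈ c.aPos ∨ y ∈ aImagPos) : c.affWord L y ∈ c.aR ∨ c.affWord L y ∈ aImagPos :=
  hy.imp (fun h => (c.affWord_mem_aR_iff L).2 h.1)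
    (fun h => (affWord_of_mem_aImagPos L h).symm ▸ h)

end Words

section SumsOfPositiveRoots

variable (c : RootCtx n)

theorem neg_asimple_ne_add {y z : EV n × ℝ} (hy : y ∈ c.aPos) (hz : z ∈ c.aPos)
    (i : Fin (n + 1)) : y + z ≠ -c.asimple i := by
  intro h
  have h1 : y.1 + z.1 = -(c.asimple i).1 := congrArg Prod.fst h
  have h2 : y.2 + z.2 = -(c.asimple i).2 := congrArg Prod.snd h
  have hy2 := snd_nonneg_of_mem_aPos hy
  have hz2 := snd_nonneg_of_mem_aPos hz
  rcases eq_or_ne i 0 with rfl | hi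
  · simp only [asimple_zero] at h2
    linarith
  · simp only [c.asimple_of_ne_zero hi, neg_zero] at h1 h2
    have hy0 : y.2 = 0 := by linarith
    have hz0 : z.2 = 0 := by linarith
    have hrest : c.IsNatComb (z.1 + c.simple (i.pred hi)) :=
      (isNatComb_of_mem_pos (fst_mem_pos_of_mem_aPos hz hz0)).add
        (isNatComb_of_mem_pos (c.simple_pos _))
    refine c.nonzero _ (fst_mem_of_mem_aR hy.1)
      ((isNatComb_of_mem_pos (fst_mem_pos_of_mem_aPos hy hy0)).eq_zero_of_add_eq_zero hrest ?_)
    rw [← add_assoc, h1]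
    exact neg_add_cancel _

theorem asimple_ne_add {y z : EV n × ℝ} (hy : y ∈ c.aPos) (hz : z ∈ c.aPos) (i : Fin (n + 1)) :
    y + z ≠ c.asimple i := by
  intro h
  have hne : ∀ {u v : EV n × ℝ}, v ∈ c.aPos → u + v = c.asimple i → u ≠ c.asimple i := by
    intro u v hv huv hu
    rw [hu, add_eq_left] at huv
    exact not_mem_aR_of_fst_eq_zero (by rw [huv]; rfl) hv.1
  -- s_i permutes the positive roots other than α_i, so it would write -α_i as a sum of two.
  refine c.neg_asimple_ne_add (c.aS_mem_aPos i hy (hne hz h))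
    (c.aS_mem_aPos i hz (hne hy (by rwa [add_comm]))) i ?_
  rw [← (c.isAffIsometry_aS i).map_add, h, aS_asimple]

variable {c}

theorem mem_aNeg_of_add_mem_aImagPos {w y : EV n × ℝ} (hw : w ∈ c.aR) (hy : y ∈ aImagPos)
    {i : Fin (n + 1)} (h : w + y = c.asimple i) : w ∈ c.aNeg := by
  obtain ⟨hy1, j, hj, hy2⟩ := hy
  have h1 : w.1 = (c.asimple i).1 := by simpa [hy1] using congrArg Prod.fst h
  have h2 : w.2 + j = (c.asimple i).2 := by rw [← hy2]; exact congrArg Prod.snd h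
  have hj1 : (1 : ℝ) ≤ j := by exact_mod_cast hj
  refine (mem_aPos_or_mem_aNeg hw).resolve_left fun hpos => ?_
  have hw2 := snd_nonneg_of_mem_aPos hpos
  rcases eq_or_ne i 0 with rfl | hi
  · rw [asimple_zero] at h1 h2
    have hθ : -c.hishort ∈ c.pos := by
      have := fst_mem_pos_of_mem_aPos hpos (by dsimp only at h2; linarith)
      rwa [h1] at this
    exact (c.pos_iff _ c.hishort_mem).1 c.hishort_pos hθ
  · rw [c.asimple_of_ne_zero hi] at h2
    dsimp only at h2
    linarith

theorem xor_mem_aNeg_of_add_eq_asimple {y z : EV n × ℝ} (hy : y ∈ c.aR ∨ y ∈ aImagPos)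
    (hz : z ∈ c.aR ∨ z ∈ aImagPos) {i : Fin (n + 1)} (h : y + z = c.asimple i) :
    Xor (y ∈ c.aNeg) (z ∈ c.aNeg) := by
  rcases hy with hy | hy <;> rcases hz with hz | hz
  · rcases mem_aPos_or_mem_aNeg hy with hy' | hy' <;>
      rcases mem_aPos_or_mem_aNeg hz with hz' | hz'
    · exact absurd h (c.asimple_ne_add hy' hz' i)
    · exact Or.inr ⟨hz', not_mem_aNeg_of_mem_aPos hy'⟩
    · exact Or.inl ⟨hy', not_mem_aNeg_of_mem_aPos hz'⟩
    · exact absurd (by rw [← h, neg_add]) (c.neg_asimple_ne_add hy' hz' i)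
  · exact Or.inl ⟨mem_aNeg_of_add_mem_aImagPos hy hz h, not_mem_aNeg_of_mem_aImagPos hz⟩
  · exact Or.inr ⟨mem_aNeg_of_add_mem_aImagPos hz hy (by rwa [add_comm]),
      not_mem_aNeg_of_mem_aImagPos hy⟩
  · refine absurd ?_ (c.nonzero _ (c.asimple_fst_mem i))
    rw [← h, Prod.fst_add, hy.1, hz.1, add_zero]

end SumsOfPositiveRoots

section ReducedWords

variable (c : RootCtx n)

theorem exists_affWord_take_eq_asimple (L : List (Fin (n + 1))) {x : EV n × ℝ} {a b : ℕ}
    (hab : a ≤ b) (hb : b ≤ L.length) (ha : c.affWord (L.take a) x ∈ c.aPos)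
    (hb' : c.affWord (L.take b) x ∈ c.aNeg) :
    ∃ q, a ≤ q ∧ ∃ hq : q < b, c.affWord (L.take q) x = c.asimple (L.get ⟨q, by omega⟩) := by
  obtain ⟨d, rfl⟩ : ∃ d, b = a + d := ⟨b - a, by omega⟩
  clear hab
  induction d generalizing a with
  | zero => exact absurd hb' (not_mem_aNeg_of_mem_aPos ha)
  | succ d ih =>
    by_cases hq : c.affWord (L.take a) x = c.asimple (L.get ⟨a, by omega⟩)
    · exact ⟨a, le_rfl, by omega, hq⟩
    · have hstep : c.affWord (L.take (a + 1)) x ∈ c.aPos := by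
        rw [c.affWord_take_succ L (by omega), Function.comp_apply]
        exact c.aS_mem_aPos _ ha hq
      obtain ⟨q, haq, hqb, hq⟩ := ih hstep (by omega) (by rwa [Nat.add_right_comm])
      exact ⟨q, by omega, by omega, hq⟩

theorem exists_affWord_take_eq_neg_asimple (L : List (Fin (n + 1))) {x : EV n × ℝ} {a b : ℕ}
    (hab : a ≤ b) (hb : b ≤ L.length) (ha : c.affWord (L.take a) x ∈ c.aNeg)
    (hb' : c.affWord (L.take b) x ∈ c.aPos) :
    ∃ q, a ≤ q ∧ ∃ hq : q < b, c.affWord (L.take q) x = -c.asimple (L.get ⟨q, by omega⟩) := by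
  have hneg : ∀ M, c.affWord M (-x) = -c.affWord M x := fun M =>
    (c.isAffIsometry_affWord M).map_neg x
  obtain ⟨q, haq, hqb, hq⟩ := c.exists_affWord_take_eq_asimple L hab hb
    (by rwa [hneg]) (by rwa [hneg, aNeg, Set.mem_ofPred_eq, neg_neg])
  exact ⟨q, haq, hqb, by rw [← hq, hneg, neg_neg]⟩

theorem affWord_cons_append_singleton {i k : Fin (n + 1)} {M : List (Fin (n + 1))}
    (h : c.affWord M (c.asimple i) = c.asimple k) : c.affWord (i :: M ++ [k]) = c.affWord M := by
  funext z
  rw [affWord_append, affWord_singleton, affWord_cons, Function.comp_apply, Function.comp_apply,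
    aS, ← h, (c.isAffIsometry_affWord M).aRefl_map]
  exact congrArg _ (c.aS_aS i z)

theorem exists_shorter_affWord_eq (L : List (Fin (n + 1))) {x : EV n × ℝ} {a b : ℕ}
    (hab : a < b) (hb : b < L.length)
    (ha : c.affWord (L.take a) x = c.asimple (L.get ⟨a, hab.trans hb⟩))
    (hb' : c.affWord (L.take b) x = -c.asimple (L.get ⟨b, hb⟩)) :
    ∃ L' : List (Fin (n + 1)), L'.length + 2 = L.length ∧ c.affWord L' = c.affWord L := by
  set M := (L.drop (a + 1)).take (b - (a + 1))
  have htake : L.take b = L.take a ++ L.get ⟨a, hab.trans hb⟩ :: M := by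
    conv_lhs => rw [show b = a + ((b - (a + 1)) + 1) by omega]
    rw [List.take_add, List.drop_eq_getElem_cons (hab.trans hb), List.take_succ_cons,
      List.get_eq_getElem]
  have hL : L = L.take b ++ L.get ⟨b, hb⟩ :: L.drop (b + 1) := by
    rw [List.get_eq_getElem, ← List.drop_eq_getElem_cons hb, List.take_append_drop]
  have hM : c.affWord M (c.asimple (L.get ⟨a, hab.trans hb⟩)) = c.asimple (L.get ⟨b, hb⟩) := by
    rw [htake, affWord_append, affWord_cons, Function.comp_apply, Function.comp_apply, ha,
      aS_asimple, (c.isAffIsometry_affWord M).map_neg] at hb'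
    exact neg_inj.1 hb'
  have hsplit : L = L.take a ++ (L.get ⟨a, hab.trans hb⟩ :: M ++ [L.get ⟨b, hb⟩])
      ++ L.drop (b + 1) := by
    conv_lhs => rw [hL, htake]
    simp
  refine ⟨L.take a ++ M ++ L.drop (b + 1), ?_, ?_⟩
  · conv_rhs => rw [hsplit]
    simp only [List.length_append, List.length_cons, List.length_take, List.length_drop,
      List.length_nil, M]
    omega
  · conv_rhs => rw [hsplit]
    rw [c.affWord_append _ (L.drop (b + 1)), c.affWord_append _ (L.drop (b + 1)),
      c.affWord_append (L.take a) M, c.affWord_append (L.take a) (_ ++ _),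
      c.affWord_cons_append_singleton hM]

variable {c}

theorem IsReducedA.affWord_take_lamSeq_mem_aNeg {π : EV n × ℝ → EV n × ℝ}
    {L : List (Fin (n + 1))} (hred : c.IsReducedA π L) (k : Fin L.length) {q : ℕ}
    (hkq : (k : ℕ) < q) (hq : q ≤ L.length) :
    c.affWord (L.take q) (c.lamSeq L k) ∈ c.aNeg := by
  have hk := c.affWord_take_lamSeq L k
  have hk1 : c.affWord (L.take (k + 1)) (c.lamSeq L k) ∈ c.aNeg := by
    rw [c.affWord_take_succ L k.isLt, Function.comp_apply, hk, aS_asimple, aNeg,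
      Set.mem_ofPred_eq, neg_neg]
    exact c.asimple_mem_aPos _
  refine (mem_aPos_or_mem_aNeg ((c.affWord_mem_aR_iff _).2 (c.lamSeq_mem_aR L k))).resolve_left
    fun hpos => ?_
  -- Otherwise α̃ᵏ turns negative at letter k and positive again at some later letter r;
  -- both letters can then be deleted, against minimality of the length.
  obtain ⟨r, hkr, hrq, hr⟩ := c.exists_affWord_take_eq_neg_asimple L hkq hq hk1 hpos
  obtain ⟨L', hlen, heq⟩ := c.exists_shorter_affWord_eq L (by omega : (k : ℕ) < r) _ hk hr
  have := hred.2 π L' hred.1 (by rw [heq])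
  omega

variable (c) in
theorem exists_lamSeq_eq_of_affWord_take_mem_aNeg (L : List (Fin (n + 1))) {x : EV n × ℝ}
    (hx : x ∈ c.aPos) {p : ℕ} (hp : p ≤ L.length) (h : c.affWord (L.take p) x ∈ c.aNeg) :
    ∃ k : Fin L.length, (k : ℕ) < p ∧ c.lamSeq L k = x := by
  obtain ⟨q, -, hqp, hq⟩ := c.exists_affWord_take_eq_asimple L (Nat.zero_le p) hp hx h
  exact ⟨⟨q, by omega⟩, hqp, (c.lamSeq_eq_iff L _).2 hq⟩

theorem IsReducedA.exists_lamSeq_eq_iff {π : EV n × ℝ → EV n × ℝ}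
    {L : List (Fin (n + 1))} (hred : c.IsReducedA π L) (p : Fin L.length) {x : EV n × ℝ}
    (hx : x ∈ c.aPos ∨ x ∈ aImagPos) :
    (∃ k : Fin L.length, k < p ∧ c.lamSeq L k = x) ↔ c.affWord (L.take p) x ∈ c.aNeg := by
  rcases hx with hx | hx
  · exact ⟨fun ⟨k, hkp, hk⟩ => hk ▸ hred.affWord_take_lamSeq_mem_aNeg k hkp p.isLt.le,
      c.exists_lamSeq_eq_of_affWord_take_mem_aNeg L hx p.isLt.le⟩
  · rw [affWord_of_mem_aImagPos _ hx]
    refine iff_of_false (fun ⟨k, _, hk⟩ => ?_) (not_mem_aNeg_of_mem_aImagPos hx)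
    exact not_mem_aR_of_mem_aImagPos hx (hk ▸ c.lamSeq_mem_aR L k)

end ReducedWords

end RootCtx

open RootCtx in
/-- Let ŵ = π_r s_{i_l}⋯s_{i_1} be a reduced decomposition in Ŵ with
λ-sequence {α̃¹,…,α̃^l}.  If α̃^p = β̃ + γ̃ where each of β̃, γ̃ is either a positive
affine root or of the form [0, j] with j a positive integer, then at least one of β̃, γ̃
belongs to λ(ŵ), and exactly one of β̃, γ̃ occurs strictly before α̃^p in the
λ-sequence. -/
theorem lamSeq_sum_split {n : ℕ} (c : RootCtx n)
    (π : EV n × ℝ → EV n × ℝ) (L : List (Fin (n + 1)))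
    (hred : c.IsReducedA π L)
    (p : Fin L.length) (β γ : EV n × ℝ)
    (hsum : c.lamSeq L p = β + γ)
    (hβ : β ∈ c.aPos ∨ (β.1 = 0 ∧ ∃ j : ℤ, 0 < j ∧ β.2 = (j : ℝ)))
    (hγ : γ ∈ c.aPos ∨ (γ.1 = 0 ∧ ∃ j : ℤ, 0 < j ∧ γ.2 = (j : ℝ))) :
    (∃ k : Fin L.length, c.lamSeq L k = β ∨ c.lamSeq L k = γ) ∧
      Xor' (∃ k : Fin L.length, k < p ∧ c.lamSeq L k = β)
           (∃ k : Fin L.length, k < p ∧ c.lamSeq L k = γ) := by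
  have hu : c.affWord (L.take p) β + c.affWord (L.take p) γ = c.asimple (L.get p) := by
    rw [← (c.isAffIsometry_affWord _).map_add, ← hsum, c.affWord_take_lamSeq]
  have hxor : Xor (c.affWord (L.take p) β ∈ c.aNeg) (c.affWord (L.take p) γ ∈ c.aNeg) :=
    xor_mem_aNeg_of_add_eq_asimple (affWord_mem_aR_or_mem_aImagPos _ hβ)
      (affWord_mem_aR_or_mem_aImagPos _ hγ) hu
  rw [hred.exists_lamSeq_eq_iff p hβ, hred.exists_lamSeq_eq_iff p hγ]
  refine ⟨?_, hxor⟩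
  rcases hxor.or with h | h
  · obtain ⟨k, -, hk⟩ := (hred.exists_lamSeq_eq_iff p hβ).2 h
    exact ⟨k, Or.inl hk⟩
  · obtain ⟨k, -, hk⟩ := (hred.exists_lamSeq_eq_iff p hγ).2 h
    exact ⟨k, Or.inr hk⟩
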